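/- arXiv:1008.4740 — 5 statements merged into one kernel-verified Lean document; each statement's English description precedes it below -/
import Mathlib

section
/- For all nonnegative integers m, the double sum ∑_{j,k} C(2m+1, 2j) * C(m-j, k) * C(2k+2j, k+j) * (a+1)^j * (a-1)^k / 2^{3(k+j)} equals the single sum 2^{-2m} ∑_{k=0}^{m} 2^k * C(2m-2k, m-k) * C(m+k, k) * (a+1)^k, as polynomials in a. -/
open Finset

/-!
Put `b = a + 1` and expand `(a - 1)^k = (b - 2)^k`. Since
`C(m-j, k) C(k, i) = C(m-j, n-j) C(m-n, k-i)` for `n = j + i`, the coefficient of `b^n` in the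
double sum factors as `8^(-n) · (∑_j C(2m+1, 2j) C(m-j, n-j)) · T(m-n, n)`, where
`T(M, n) = ∑_s C(M, s) (-1/4)^s C(2(n+s), n+s)`.

The first factor is `4^n C(m+n, 2n)`. Reflecting `j ↦ m - j` turns it into an odd-index sum
`A(N, c) = ∑_i C(N, 2i+1) C(i, c)`; Pascal's rule gives the Chebyshev-type recurrence
`A(N+2, c+1) = 2 A(N+1, c+1) + A(N, c)`, and the closed form `A(2c+e+1, c) = 2^e C(c+e, c)`
satisfies it.

The second factor is `T(M, n) = C(2M, M) C(2n, n) / (4^M C(M+n, M))`, by induction on `M`: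
Pascal's rule gives `T(M+1, n) = T(M, n) - T(M, n+1) / 4`.
Multiplying out gives the coefficient `2^n C(2m-2n, m-n) C(m+n, n) / 4^m` of the single sum.
-/

theorem sum_range_sum_range_sub_eq_sum_range_sum_range {M : Type*} [AddCommMonoid M] (m : ℕ)
    (f : ℕ → ℕ → M) :
    ∑ j ∈ range (m + 1), ∑ i ∈ range (m - j + 1), f j i =
      ∑ n ∈ range (m + 1), ∑ j ∈ range (n + 1), f j (n - j) := by
  rw [sum_range_diag_flip]
  refine sum_congr rfl fun j hj => ?_
  rw [show m + 1 - j = m - j + 1 by simp at hj; omega]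

theorem sum_choose_mul_add_pow {R : Type*} [CommSemiring R] (M : ℕ) (f : ℕ → R) (x y : R) :
    ∑ k ∈ range (M + 1), (M.choose k : R) * f k * (x + y) ^ k =
      ∑ i ∈ range (M + 1), (M.choose i : R) * x ^ i *
        ∑ s ∈ range (M - i + 1), ((M - i).choose s : R) * f (i + s) * y ^ s := by
  calc _ = ∑ k ∈ range (M + 1), ∑ i ∈ range (k + 1), (M.choose (i + (k - i)) : R) *
        (i + (k - i)).choose i * f (i + (k - i)) * x ^ i * y ^ (k - i) := by
        refine sum_congr rfl fun k _ => ?_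
        rw [add_pow, mul_sum]
        refine sum_congr rfl fun i hi => ?_
        rw [Nat.add_sub_cancel' (by simp at hi; omega)]
        ring
    _ = ∑ i ∈ range (M + 1), ∑ s ∈ range (M + 1 - i), (M.choose (i + s) : R) *
        (i + s).choose i * f (i + s) * x ^ i * y ^ s :=
      sum_range_diag_flip (M + 1) fun i s => (M.choose (i + s) : R) *
        (i + s).choose i * f (i + s) * x ^ i * y ^ s
    _ = _ := by
        refine sum_congr rfl fun i hi => ?_
        rw [show M + 1 - i = M - i + 1 by simp at hi; omega, mul_sum]
        refine sum_congr rfl fun s _ => ?_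
        have h := Nat.choose_mul (n := M) (Nat.le_add_right i s)
        rw [Nat.add_sub_cancel_left] at h
        rw [← Nat.cast_mul, h, Nat.cast_mul]
        ring

theorem sum_range_succ_choose_mul {R : Type*} [CommSemiring R] (M : ℕ) (g : ℕ → R) :
    ∑ s ∈ range (M + 2), ((M + 1).choose s : R) * g s =
      ∑ s ∈ range (M + 1), (M.choose s : R) * g s +
        ∑ s ∈ range (M + 1), (M.choose s : R) * g (s + 1) :=
  sum_choose_succ_mul (fun i _ => g i) M

def oddBinomSum (N c : ℕ) : ℕ := ∑ i ∈ range N, N.choose (2 * i + 1) * i.choose c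

theorem oddBinomSum_eq_sum_range {N K : ℕ} (c : ℕ) (hK : N ≤ 2 * K) :
    oddBinomSum N c = ∑ i ∈ range K, N.choose (2 * i + 1) * i.choose c := by
  rcases le_total N K with h | h
  · refine sum_subset (range_subset_range.mpr h) fun i _ hi => ?_
    rw [Nat.choose_eq_zero_of_lt (by simp at hi; omega), zero_mul]
  · refine (sum_subset (range_subset_range.mpr h) fun i _ hi => ?_).symm
    rw [Nat.choose_eq_zero_of_lt (by simp at hi; omega), zero_mul]

theorem oddBinomSum_eq_zero {N c : ℕ} (h : N ≤ 2 * c) : oddBinomSum N c = 0 :=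
  sum_eq_zero fun i _ => by
    rcases lt_or_ge i c with hi | hi
    · rw [Nat.choose_eq_zero_of_lt hi, mul_zero]
    · rw [Nat.choose_eq_zero_of_lt (by omega), zero_mul]

theorem choose_add_two_add_choose (N k : ℕ) :
    (N + 2).choose (k + 2) + N.choose (k + 2) = 2 * (N + 1).choose (k + 2) + N.choose k := by
  rw [Nat.choose_succ_succ' (N + 1), Nat.choose_succ_succ' N k, Nat.choose_succ_succ' N (k + 1)]
  ring

theorem oddBinomSum_add_two_add (N c : ℕ) :
    oddBinomSum (N + 2) c + oddBinomSum N c =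
      2 * oddBinomSum (N + 1) c + ∑ i ∈ range (N + 1), N.choose (2 * i + 1) * (i + 1).choose c := by
  rw [oddBinomSum_eq_sum_range (N := N + 2) (K := N + 2) c (by omega),
    oddBinomSum_eq_sum_range (N := N + 1) (K := N + 2) c (by omega),
    oddBinomSum_eq_sum_range (N := N) (K := N + 2) c (by omega), mul_sum, ← sum_add_distrib,
    sum_range_succ' _ (N + 1), sum_range_succ' _ (N + 1)]
  have pascal : ∀ i, (N + 2).choose (2 * (i + 1) + 1) * (i + 1).choose c
      + N.choose (2 * (i + 1) + 1) * (i + 1).choose c =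
      2 * ((N + 1).choose (2 * (i + 1) + 1) * (i + 1).choose c)
        + N.choose (2 * i + 1) * (i + 1).choose c := fun i => by
    rw [← add_mul, show 2 * (i + 1) + 1 = 2 * i + 1 + 2 by ring, choose_add_two_add_choose]
    ring
  simp only [pascal, sum_add_distrib, mul_zero, zero_add, Nat.choose_one_right]
  ring

theorem oddBinomSum_add_two_zero (N : ℕ) :
    oddBinomSum (N + 2) 0 = 2 * oddBinomSum (N + 1) 0 := by
  have h := oddBinomSum_add_two_add N 0
  have shifted :
      ∑ i ∈ range (N + 1), N.choose (2 * i + 1) * (i + 1).choose 0 = oddBinomSum N 0 := by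
    simp [oddBinomSum_eq_sum_range (N := N) (K := N + 1) 0 (by omega)]
  omega

theorem oddBinomSum_add_two_succ (N c : ℕ) :
    oddBinomSum (N + 2) (c + 1) = 2 * oddBinomSum (N + 1) (c + 1) + oddBinomSum N c := by
  have h := oddBinomSum_add_two_add N (c + 1)
  simp only [Nat.choose_succ_succ', mul_add, sum_add_distrib] at h
  rw [← oddBinomSum_eq_sum_range (N := N) (K := N + 1) _ (by omega),
    ← oddBinomSum_eq_sum_range (N := N) (K := N + 1) _ (by omega)] at h
  omega

theorem oddBinomSum_two_mul_add_add_one (c e : ℕ) :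
    oddBinomSum (2 * c + e + 1) c = 2 ^ e * (c + e).choose c := by
  induction c generalizing e with
  | zero =>
    induction e with
    | zero => decide
    | succ e ih =>
      simp only [mul_zero, zero_add, Nat.choose_zero_right, mul_one] at ih ⊢
      rw [oddBinomSum_add_two_zero, ih, pow_succ, mul_comm]
  | succ c ihc =>
    induction e with
    | zero =>
      rw [show 2 * (c + 1) + 0 + 1 = 2 * c + 1 + 2 by ring, oddBinomSum_add_two_succ,
        oddBinomSum_eq_zero (by omega), ihc 0]
      simp
    | succ e ih =>
      rw [show 2 * (c + 1) + (e + 1) + 1 = (2 * c + (e + 1) + 1) + 2 by ring,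
        oddBinomSum_add_two_succ, show 2 * c + (e + 1) + 1 + 1 = 2 * (c + 1) + e + 1 by ring,
        ih, ihc,
        show c + 1 + (e + 1) = c + 1 + e + 1 by ring, Nat.choose_succ_succ' (c + 1 + e),
        show c + (e + 1) = c + 1 + e by ring]
      ring

theorem sum_choose_two_mul_mul_choose_sub {m n : ℕ} (hn : n ≤ m) :
    ∑ j ∈ range (n + 1), (2 * m + 1).choose (2 * j) * (m - j).choose (n - j) =
      4 ^ n * (m + n).choose (2 * n) := by
  calc ∑ j ∈ range (n + 1), (2 * m + 1).choose (2 * j) * (m - j).choose (n - j)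
      = ∑ j ∈ range (m + 1), (2 * m + 1).choose (2 * j) * (m - j).choose (m - n) := by
        refine sum_subset_zero_on_sdiff (range_subset_range.mpr (by omega)) (fun j hj => ?_)
          (fun j hj => ?_)
        · simp only [mem_sdiff, mem_range] at hj
          rw [Nat.choose_eq_zero_of_lt (n := m - j) (by omega), mul_zero]
        · simp only [mem_range] at hj
          rw [Nat.choose_symm_of_eq_add (n := m - j) (a := n - j) (b := m - n) (by omega)]
    _ = ∑ i ∈ range (m + 1), (2 * m + 1).choose (2 * i + 1) * i.choose (m - n) := by
        rw [← sum_range_reflect]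
        refine sum_congr rfl fun i hi => ?_
        simp only [mem_range] at hi
        rw [Nat.choose_symm_of_eq_add (by omega : 2 * m + 1 = 2 * (m + 1 - 1 - i) + (2 * i + 1)),
          show m - (m + 1 - 1 - i) = i by omega]
    _ = oddBinomSum (2 * m + 1) (m - n) := (oddBinomSum_eq_sum_range _ (by omega)).symm
    _ = 4 ^ n * (m + n).choose (2 * n) := by
        obtain ⟨d, rfl⟩ : ∃ d, m = n + d := ⟨m - n, by omega⟩
        rw [show 2 * (n + d) + 1 = 2 * d + 2 * n + 1 by ring, show n + d - n = d by omega,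
          oddBinomSum_two_mul_add_add_one, pow_mul, Nat.choose_symm_add,
          show n + d + n = d + 2 * n by ring]
        norm_num

theorem sum_choose_mul_centralBinom_mul_neg_quarter_pow {K : Type*} [Field K] [CharZero K]
    (M n : ℕ) :
    ∑ s ∈ range (M + 1), (M.choose s : K) * (n + s).centralBinom * (-1 / 4) ^ s =
      M.centralBinom * n.centralBinom / (4 ^ M * (M + n).choose M) := by
  induction M generalizing n with
  | zero => simp
  | succ M ih =>
    have h1 : ((M : K) + 1) ≠ 0 := Nat.cast_add_one_ne_zero M
    have h2 : ((n : K) + 1) ≠ 0 := Nat.cast_add_one_ne_zero n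
    have h3 : ((M : K) + n + 1) ≠ 0 := by exact_mod_cast Nat.succ_ne_zero (M + n)
    have hM : ((M + 1).centralBinom : K) = 2 * (2 * M + 1) * M.centralBinom / (M + 1) := by
      rw [eq_div_iff h1]
      exact_mod_cast (mul_comm _ _).trans (Nat.succ_mul_centralBinom_succ M)
    have hn : ((n + 1).centralBinom : K) = 2 * (2 * n + 1) * n.centralBinom / (n + 1) := by
      rw [eq_div_iff h2]
      exact_mod_cast (mul_comm _ _).trans (Nat.succ_mul_centralBinom_succ n)
    have hM' : ((M + 1 + n).choose (M + 1) : K) = (M + n + 1) * (M + n).choose M / (M + 1) := by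
      rw [eq_div_iff h1, show M + 1 + n = M + n + 1 by ring]
      exact_mod_cast (Nat.add_one_mul_choose_eq (M + n) M).symm
    have hn' : ((M + (n + 1)).choose M : K) = (M + n + 1) * (M + n).choose M / (n + 1) := by
      rw [eq_div_iff h2, show M + (n + 1) = M + n + 1 by ring]
      have h := Nat.choose_mul_succ_eq (M + n) M
      rw [show M + n + 1 - M = n + 1 by omega] at h
      exact_mod_cast h.symm.trans (mul_comm _ _)
    simp only [mul_assoc]
    rw [sum_range_succ_choose_mul M fun s => ((n + s).centralBinom : K) * (-1 / 4) ^ s]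
    have shift : ∑ s ∈ range (M + 1),
          (M.choose s : K) * ((n + (s + 1)).centralBinom * (-1 / 4) ^ (s + 1)) =
        -1 / 4 * ∑ s ∈ range (M + 1),
          (M.choose s : K) * (n + 1 + s).centralBinom * (-1 / 4) ^ s := by
      rw [mul_sum]
      refine sum_congr rfl fun s _ => ?_
      rw [show n + (s + 1) = n + 1 + s by ring]
      ring
    rw [shift, ih]
    simp only [← mul_assoc]
    rw [ih, hM, hn, hM', hn']
    field_simp
    ring

theorem sum_choose_mul_centralBinom_mul_sub_one_div_eight_pow {K : Type*} [Field K] [CharZero K]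
    (M j : ℕ) (a : K) :
    ∑ k ∈ range (M + 1), (M.choose k : K) * (j + k).centralBinom * ((a - 1) / 8) ^ k =
      ∑ i ∈ range (M + 1), (M.choose i : K) * ((a + 1) / 8) ^ i *
        ((M - i).centralBinom * (j + i).centralBinom / (4 ^ (M - i) * (M + j).choose (M - i))) := by
  rw [show (a - 1) / 8 = (a + 1) / 8 + -1 / 4 by ring, sum_choose_mul_add_pow]
  refine sum_congr rfl fun i hi => ?_
  simp only [← add_assoc j]
  rw [sum_choose_mul_centralBinom_mul_neg_quarter_pow,
    show M - i + (j + i) = M + j by simp at hi; omega]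

theorem boros_moll_inner_sum_eq {K : Type*} [Field K] [CharZero K] {m j : ℕ} (hj : j ≤ m) (a : K) :
    ∑ k ∈ range (m - j + 1), ((2 * m + 1).choose (2 * j) : K) * (m - j).choose k *
        (2 * k + 2 * j).choose (k + j) * (a + 1) ^ j * (a - 1) ^ k / 2 ^ (3 * (k + j)) =
      ∑ i ∈ range (m - j + 1), ((2 * m + 1).choose (2 * j) : K) * (m - j).choose i *
        ((a + 1) / 8) ^ (j + i) * ((m - (j + i)).centralBinom * (j + i).centralBinom /
          (4 ^ (m - (j + i)) * m.choose (m - (j + i)))) := by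
  have summand (k : ℕ) : ((2 * m + 1).choose (2 * j) : K) * (m - j).choose k *
      (2 * k + 2 * j).choose (k + j) * (a + 1) ^ j * (a - 1) ^ k / 2 ^ (3 * (k + j)) =
      (2 * m + 1).choose (2 * j) * ((a + 1) / 8) ^ j *
        ((m - j).choose k * (j + k).centralBinom * ((a - 1) / 8) ^ k) := by
    rw [Nat.centralBinom, show 2 * (j + k) = 2 * k + 2 * j by ring, add_comm j k, pow_mul,
      add_comm k j, pow_add, div_pow, div_pow]
    norm_num
    ring
  rw [sum_congr rfl fun k _ => summand k, ← mul_sum,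
    sum_choose_mul_centralBinom_mul_sub_one_div_eight_pow, mul_sum]
  refine sum_congr rfl fun i _ => ?_
  rw [Nat.sub_sub, Nat.sub_add_cancel hj, pow_add]
  ring

theorem boros_moll_coeff_eq {K : Type*} [Field K] [CharZero K] {m n : ℕ} (hn : n ≤ m) (b : K) :
    4 ^ n * ((m + n).choose (2 * n) : K) * (b / 8) ^ n *
        ((m - n).centralBinom * n.centralBinom / (4 ^ (m - n) * m.choose (m - n))) =
      2 ^ n * (2 * m - 2 * n).choose (m - n) * (m + n).choose n * b ^ n / 2 ^ (2 * m) := by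
  obtain ⟨d, rfl⟩ : ∃ d, m = n + d := ⟨m - n, by omega⟩
  have key : (n + d + n).choose (2 * n) * (2 * n).choose n =
      (n + d + n).choose n * (n + d).choose n := by
    rw [Nat.choose_mul (by omega), show n + d + n - n = n + d by omega, show 2 * n - n = n by omega]
  have hpos : ((n + d).choose n : K) ≠ 0 := Nat.cast_ne_zero.mpr (Nat.choose_pos (by omega)).ne'
  rw [show n + d - n = d by omega, show 2 * (n + d) - 2 * n = 2 * d by omega,
    ← Nat.choose_symm_add, Nat.centralBinom, Nat.centralBinom]
  have keyK : ((n + d + n).choose (2 * n) : K) * (2 * n).choose n =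
      (n + d + n).choose n * (n + d).choose n := by exact_mod_cast key
  have two_pow (k e : ℕ) : ((2 ^ k : ℕ) : K) ^ e = 2 ^ (k * e) := by push_cast; rw [pow_mul]
  rw [div_pow, show (8 : K) = (2 ^ 3 : ℕ) by norm_num, show (4 : K) = (2 ^ 2 : ℕ) by norm_num,
    two_pow, two_pow, two_pow]
  field_simp
  linear_combination (2 ^ (2 * n) * 2 ^ (2 * (n + d)) * b ^ n * ((2 * d).choose d : K)) * keyK

theorem boros_moll_double_eq_single (m : ℕ) (a : ℚ) :
    (∑ j ∈ Finset.range (m+1), ∑ k ∈ Finset.range (m-j+1),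
      (Nat.choose (2*m+1) (2*j) : ℚ) * (Nat.choose (m-j) k) *
        (Nat.choose (2*k+2*j) (k+j)) * (a+1)^j * (a-1)^k / 2^(3*(k+j))) =
    (∑ k ∈ Finset.range (m+1),
      (2:ℚ)^k * (Nat.choose (2*m-2*k) (m-k)) * (Nat.choose (m+k) k) * (a+1)^k) / 2^(2*m) := by
  rw [sum_congr rfl fun j hj => boros_moll_inner_sum_eq (mem_range_succ_iff.mp hj) a,
    sum_range_sum_range_sub_eq_sum_range_sum_range, sum_div]
  refine sum_congr rfl fun n hn => ?_
  have hnm := mem_range_succ_iff.mp hn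
  have odd_part : (∑ j ∈ range (n + 1), (2 * m + 1).choose (2 * j) * (m - j).choose (n - j) : ℚ) =
      4 ^ n * (m + n).choose (2 * n) := by exact_mod_cast sum_choose_two_mul_mul_choose_sub hnm
  rw [← boros_moll_coeff_eq hnm, ← odd_part, sum_mul, sum_mul]
  refine sum_congr rfl fun j hj => ?_
  rw [Nat.add_sub_cancel' (mem_range_succ_iff.mp hj)]
end

section
/- For all nonnegative integers m, ∑_{k=0}^{m} 2^{-2k} * C(2k, k) * C(2m-k, m) = ∑_{k=0}^{m} 2^{-2k} * C(2k, k) * C(2m+1, 2k). -/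
/-!
Multiplying both sides by `4 ^ m` turns them into sums of natural numbers, and both equal
`C(4m+1, 2m)`.

On the right this comes from reading off the middle coefficient of
`(1 + X) ^ (4m+2) = (1 + X (X + 2)) ^ (2m+1)`, which gives
`∑ₖ 2 ^ (n - 2k) C(n, 2k) C(2k, k) = C(2n, n)` for `n = 2m + 1`.

On the left, reversing the order of summation gives the diagonal value of the two-parameter
convolution `S m r = ∑ⱼ 4 ^ j C(m+j, j) C(2(r-j), r-j)`, the coefficient of `x ^ r` in
`(1 - 4x) ^ (-(m+1)) (1 - 4x) ^ (-1/2)`. Pascal's rule for `C(m+j, j)` gives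
`S (m+1) (r+1) = S m (r+1) + 4 S (m+1) r`, and a double induction identifies `S m r` with
`(2m+2r+1)! m! / ((m+r)! (2m+1)! r!)`.
-/

open Finset Nat Polynomial

theorem sum_two_pow_mul_choose_two_mul_mul_centralBinom (n : ℕ) :
    ∑ k ∈ range (n + 1), 2 ^ (n - 2 * k) * n.choose (2 * k) * centralBinom k = centralBinom n := by
  have hsq : (X + 1 : ℕ[X]) ^ (2 * n) = (1 + X * (X + C 2)) ^ n := by
    rw [pow_mul, map_ofNat C 2]; ring
  have hcoeff := coeff_X_add_one_pow ℕ (2 * n) n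
  rw [hsq, add_pow, finsetSum_coeff, ← centralBinom_eq_two_mul_choose, Nat.cast_id] at hcoeff
  rw [← hcoeff]
  refine sum_congr rfl fun k hk => ?_
  have hkn : k ≤ n := Nat.lt_succ_iff.mp (mem_range.mp hk)
  rw [one_pow, one_mul, mul_pow, mul_assoc, ← Nat.cast_comm, ← C_eq_natCast, coeff_C_mul,
    coeff_X_pow_mul', if_pos (Nat.sub_le n k), coeff_X_add_C_pow, Nat.sub_sub_self hkn,
    centralBinom_eq_two_mul_choose, Nat.choose_mul (by omega), Nat.sub_sub, ← two_mul,
    show 2 * k - k = k by omega]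
  push_cast
  ring

theorem centralBinom_two_mul_add_one (m : ℕ) :
    centralBinom (2 * m + 1) = 2 * (4 * m + 1).choose (2 * m) := by
  rw [centralBinom_eq_two_mul_choose, show 2 * (2 * m + 1) = 4 * m + 1 + 1 by ring,
    Nat.choose_succ_succ', show 4 * m + 1 = 2 * (2 * m) + 1 by ring, choose_symm_half]
  ring

theorem sum_four_pow_mul_centralBinom_mul_choose_two_mul (m : ℕ) :
    ∑ k ∈ range (m + 1), 4 ^ (m - k) * ((2 * k).choose k * (2 * m + 1).choose (2 * k)) =
      (4 * m + 1).choose (2 * m) := by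
  have hsum := sum_two_pow_mul_choose_two_mul_mul_centralBinom (2 * m + 1)
  rw [← sum_subset (range_subset_range.mpr (by omega : m + 1 ≤ 2 * m + 1 + 1)),
    centralBinom_two_mul_add_one] at hsum
  · rw [← Nat.mul_left_cancel_iff two_pos, ← hsum, mul_sum]
    refine sum_congr rfl fun k hk => ?_
    have hkm : k ≤ m := Nat.lt_succ_iff.mp (mem_range.mp hk)
    rw [show 2 * m + 1 - 2 * k = 2 * (m - k) + 1 by omega, pow_succ, pow_mul,
      centralBinom_eq_two_mul_choose]
    ring
  · intro k _ hk
    rw [Nat.choose_eq_zero_of_lt (by simp at hk; omega), mul_zero, zero_mul]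

def centralBinomConv (m r : ℕ) : ℕ :=
  ∑ j ∈ range (r + 1), 4 ^ j * (m + j).choose j * centralBinom (r - j)

theorem centralBinomConv_zero_right (m : ℕ) : centralBinomConv m 0 = 1 := by
  simp [centralBinomConv]

theorem centralBinomConv_zero_succ (r : ℕ) :
    centralBinomConv 0 (r + 1) = centralBinom (r + 1) + 4 * centralBinomConv 0 r := by
  rw [centralBinomConv, sum_range_succ', centralBinomConv, mul_sum, add_comm]
  simp [pow_succ, mul_comm, mul_left_comm]

theorem centralBinomConv_succ_succ (m r : ℕ) :
    centralBinomConv (m + 1) (r + 1) =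
      centralBinomConv m (r + 1) + 4 * centralBinomConv (m + 1) r := by
  simp only [centralBinomConv, sum_range_succ' _ (r + 1), mul_sum,
    add_right_comm _ _ (∑ _ ∈ _, _), ← sum_add_distrib, add_zero, Nat.choose_zero_right,
    Nat.add_sub_add_right]
  congr 1
  refine sum_congr rfl fun j _ => ?_
  rw [show m + 1 + (j + 1) = m + j + 1 + 1 by ring, Nat.choose_succ_succ',
    show m + (j + 1) = m + j + 1 by ring, show m + 1 + j = m + j + 1 by ring]
  ring

def centralBinomConvFormula (m r : ℕ) : ℚ :=
  ((2 * m + 2 * r + 1)! * m ! : ℚ) / ((m + r)! * (2 * m + 1)! * r !)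

theorem centralBinomConvFormula_zero_right (m : ℕ) : centralBinomConvFormula m 0 = 1 := by
  rw [centralBinomConvFormula]
  field_simp
  simp

theorem centralBinomConvFormula_zero_succ (r : ℕ) :
    centralBinomConvFormula 0 (r + 1) =
      centralBinom (r + 1) + 4 * centralBinomConvFormula 0 r := by
  rw [centralBinomConvFormula, centralBinomConvFormula, centralBinom_eq_two_mul_choose,
    Nat.cast_choose ℚ (by omega), show 2 * (r + 1) - (r + 1) = r + 1 by omega]
  simp only [mul_zero, zero_add, show 2 * (r + 1) = 2 * r + 1 + 1 by ring, Nat.factorial_succ]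
  push_cast
  field_simp
  ring

theorem centralBinomConvFormula_succ_succ (m r : ℕ) :
    centralBinomConvFormula (m + 1) (r + 1) =
      centralBinomConvFormula m (r + 1) + 4 * centralBinomConvFormula (m + 1) r := by
  simp only [centralBinomConvFormula,
    show 2 * (m + 1) + 2 * (r + 1) + 1 = 2 * m + 2 * r + 1 + 4 by ring,
    show 2 * m + 2 * (r + 1) + 1 = 2 * m + 2 * r + 1 + 2 by ring,
    show 2 * (m + 1) + 2 * r + 1 = 2 * m + 2 * r + 1 + 2 by ring,
    show m + 1 + (r + 1) = m + r + 2 by ring, show m + (r + 1) = m + r + 1 by ring,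
    show m + 1 + r = m + r + 1 by ring, show 2 * (m + 1) + 1 = 2 * m + 1 + 2 by ring,
    Nat.factorial_succ]
  push_cast
  field_simp
  ring

theorem centralBinomConvFormula_self (m : ℕ) :
    centralBinomConvFormula m m = (4 * m + 1).choose (2 * m) := by
  rw [centralBinomConvFormula, Nat.cast_choose ℚ (by omega),
    show 4 * m + 1 - 2 * m = 2 * m + 1 by omega, show 2 * m + 2 * m + 1 = 4 * m + 1 by ring,
    show m + m = 2 * m by ring]
  field_simp

theorem centralBinomConv_eq_formula (m r : ℕ) :
    (centralBinomConv m r : ℚ) = centralBinomConvFormula m r := by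
  induction m, r using Nat.pincerRecursion with
  | Ha0 m => simp [centralBinomConv_zero_right, centralBinomConvFormula_zero_right]
  | H0b r =>
    induction r with
    | zero => simp [centralBinomConv_zero_right, centralBinomConvFormula_zero_right]
    | succ r ih =>
      rw [centralBinomConvFormula_zero_succ, ← ih]
      exact_mod_cast centralBinomConv_zero_succ r
  | H m r ih₁ ih₂ =>
    rw [centralBinomConvFormula_succ_succ, ← ih₁, ← ih₂]
    exact_mod_cast centralBinomConv_succ_succ m r

theorem sum_four_pow_mul_centralBinom_mul_choose_sub (m : ℕ) :
    ∑ k ∈ range (m + 1), 4 ^ (m - k) * ((2 * k).choose k * (2 * m - k).choose m) =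
      (4 * m + 1).choose (2 * m) := by
  have hconv : ∑ k ∈ range (m + 1), 4 ^ (m - k) * ((2 * k).choose k * (2 * m - k).choose m) =
      centralBinomConv m m := by
    rw [centralBinomConv, ← sum_range_reflect]
    refine sum_congr rfl fun j hj => ?_
    have hjm : j ≤ m := Nat.lt_succ_iff.mp (mem_range.mp hj)
    rw [show m + 1 - 1 - j = m - j by omega, Nat.sub_sub_self hjm,
      show 2 * m - (m - j) = m + j by omega, Nat.choose_symm_add, centralBinom_eq_two_mul_choose]
    ring
  rw [hconv]
  exact_mod_cast (centralBinomConv_eq_formula m m).trans (centralBinomConvFormula_self m)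

theorem sum_two_zpow_neg_two_mul_mul (m : ℕ) (f : ℕ → ℚ) :
    ∑ k ∈ range (m + 1), (2 : ℚ) ^ (-(2 * k : ℤ)) * f k =
      (∑ k ∈ range (m + 1), 4 ^ (m - k) * f k) / 4 ^ m := by
  rw [sum_div]
  refine sum_congr rfl fun k hk => ?_
  rw [zpow_neg, zpow_mul, show (2 : ℚ) ^ (2 : ℤ) = 4 by norm_num, zpow_natCast,
    pow_sub₀ _ four_ne_zero (Nat.lt_succ_iff.mp (mem_range.mp hk))]
  field_simp

theorem boros_moll_at_one (m : ℕ) :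
    (∑ k ∈ Finset.range (m+1),
      (2:ℚ)^(-(2*k : ℤ)) * (Nat.choose (2*k) k) * (Nat.choose (2*m-k) m)) =
    (∑ k ∈ Finset.range (m+1),
      (2:ℚ)^(-(2*k : ℤ)) * (Nat.choose (2*k) k) * (Nat.choose (2*m+1) (2*k))) := by
  simp only [mul_assoc, sum_two_zpow_neg_two_mul_mul]
  congr 1
  exact_mod_cast (sum_four_pow_mul_centralBinom_mul_choose_sub m).trans
    (sum_four_pow_mul_centralBinom_mul_choose_two_mul m).symm
end

section
/- For m ≥ 2 and 1 ≤ i ≤ m-1, the recurrence i(i+1) d_{i+1}(m) = i(2m+1) d_i(m) - (m-i+1)(m+i) d_{i-1}(m) holds. -/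
open Finset

/-- The Boros-Moll coefficient `d_i(m)`. -/
def bmCoeff (m i : ℕ) : ℚ :=
  (∑ k ∈ Finset.Icc i m,
    (2:ℚ)^k * (Nat.choose (2*m-2*k) (m-k)) * (Nat.choose (m+k) k) * (Nat.choose k i)) / 2^(2*m)

/-- The rescaled coefficient `D_i(m)`. -/
def bmD (m i : ℕ) : ℚ :=
  (Nat.choose (2*m) (m-i)) * (Nat.factorial m) * (Nat.factorial i) *
    (Nat.factorial (m-i)) * 2^i * bmCoeff m i

/-! With `c_k = 2^k C(2m-2k, m-k) C(m+k, k)` we have `d_i(m) = 2^{-2m} ∑_{k ≤ m} c_k C(k, i)`.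
Pascal-type identities rewrite `i(i+1) C(k,i+1) - i(2m+1) C(k,i) + (m-i+1)(m+i) C(k,i-1)` as
`(m-k)(m+k+1) C(k,i-1) - (2m-2k+1) i C(k,i)`, and the ratio
`c_{k+1} (k+1)(2m-2k-1) = c_k (m-k)(m+k+1)` makes the `c_k`-weighted sum of these telescope to the
term at `k = m`, which vanishes. -/

theorem Nat.cast_choose_succ_right_eq {R : Type*} [CommRing R] (n k : ℕ) :
    (n.choose (k + 1) : R) * (k + 1) = n.choose k * (n - k) := by
  rcases le_or_gt k n with hkn | hnk
  · rw [← Nat.cast_sub hkn]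
    exact_mod_cast congrArg (Nat.cast : ℕ → R) (Nat.choose_succ_right_eq n k)
  · simp [Nat.choose_eq_zero_of_lt hnk, Nat.choose_eq_zero_of_lt (Nat.lt_succ_of_lt hnk)]

theorem choose_three_term_eq {R : Type*} [CommRing R] (x : R) (k i : ℕ) :
    (i + 1) * (i + 2) * (k.choose (i + 2) : R) - (i + 1) * (2 * x + 1) * k.choose (i + 1)
        + (x - i) * (x + i + 1) * k.choose i
      = (x - k) * (x + k + 1) * k.choose i - (2 * x - 2 * k + 1) * (i + 1) * k.choose (i + 1) := by
  have h₁ := Nat.cast_choose_succ_right_eq (R := R) k i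
  have h₂ := Nat.cast_choose_succ_right_eq (R := R) k (i + 1)
  push_cast at h₂
  linear_combination (i + 1) * h₂ - (k + i + 1) * h₁

def bmWeight (m k : ℕ) : ℚ := 2 ^ k * (m - k).centralBinom * (m + k).choose k

theorem bmCoeff_eq_sum_range (m i : ℕ) :
    bmCoeff m i = (∑ k ∈ range (m + 1), bmWeight m k * k.choose i) / 2 ^ (2 * m) := by
  rw [bmCoeff]
  congr 1
  refine sum_subset_zero_on_sdiff (fun k hk => ?_) (fun k hk => ?_) (fun k hk => ?_)
  · simp only [mem_Icc, mem_range] at hk ⊢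
    omega
  · simp only [mem_sdiff, mem_Icc, mem_range] at hk
    simp [Nat.choose_eq_zero_of_lt (show k < i by omega)]
  · rw [bmWeight, Nat.centralBinom_eq_two_mul_choose, Nat.mul_sub]

theorem bmWeight_mul_of_lt {m k : ℕ} (hk : k < m) :
    bmWeight m (k + 1) * ((k + 1) * (2 * (m - k) - 1)) = bmWeight m k * ((m - k) * (m + k + 1)) := by
  obtain ⟨n, rfl⟩ := Nat.exists_eq_add_of_lt hk
  have hc : ((n + 1) * (n + 1).centralBinom : ℚ) = 2 * (2 * n + 1) * n.centralBinom := by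
    exact_mod_cast Nat.succ_mul_centralBinom_succ n
  have hb : ((k + n + 1 + k + 1) * (k + n + 1 + k).choose k : ℚ)
      = (k + n + 1 + k + 1).choose (k + 1) * (k + 1) := by
    exact_mod_cast Nat.add_one_mul_choose_eq (k + n + 1 + k) k
  simp only [bmWeight, show k + n + 1 - k = n + 1 by omega, show k + n + 1 - (k + 1) = n by omega,
    show k + n + 1 + (k + 1) = k + n + 1 + k + 1 by omega]
  push_cast
  linear_combination (-2 ^ k * 2 * (2 * n + 1) * (n.centralBinom : ℚ)) * hb
    - 2 ^ k * (k + n + 1 + k + 1) * ((k + n + 1 + k).choose k : ℚ) * hc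

theorem sum_bmWeight_mul_three_term (m i : ℕ) :
    ∑ k ∈ range (m + 1), bmWeight m k * ((i + 1) * (i + 2) * k.choose (i + 2)
      - (i + 1) * (2 * m + 1) * k.choose (i + 1) + (m - i) * (m + i + 1) * k.choose i) = 0 := by
  set g : ℕ → ℚ := fun k => bmWeight m k * ((m - k) * (m + k + 1) * k.choose i)
  set e : ℕ → ℚ := fun k => bmWeight m k * ((2 * m - 2 * k + 1) * (i + 1) * k.choose (i + 1))
  have he : ∀ k ∈ range m, e (k + 1) = g k := by
    intro k hk
    have hc : ((k + 1).choose (i + 1) * (i + 1) : ℚ) = (k + 1) * k.choose i := by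
      exact_mod_cast (Nat.add_one_mul_choose_eq k i).symm
    simp only [e, g]
    push_cast
    linear_combination (k.choose i : ℚ) * bmWeight_mul_of_lt (mem_range.mp hk)
      + bmWeight m (k + 1) * (2 * m - 2 * k - 1) * hc
  calc _ = ∑ k ∈ range (m + 1), (g k - e k) := by
        refine sum_congr rfl fun k _ => ?_
        simp only [g, e, choose_three_term_eq]
        ring
    _ = 0 := by
        rw [sum_sub_distrib, sum_range_succ, sum_range_succ' e, sum_congr rfl he]
        simp [g, e]

theorem bmCoeff_three_term (m i : ℕ) :
    (i + 1) * (i + 2) * bmCoeff m (i + 2)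
      = (i + 1) * (2 * m + 1) * bmCoeff m (i + 1) - (m - i) * (m + i + 1) * bmCoeff m i := by
  set S : ℕ → ℚ := fun j => ∑ k ∈ range (m + 1), bmWeight m k * k.choose j
  have h : (i + 1) * (i + 2) * S (i + 2) - (i + 1) * (2 * m + 1) * S (i + 1)
      + (m - i) * (m + i + 1) * S i = 0 := by
    rw [← sum_bmWeight_mul_three_term m i]
    simp only [S, mul_sum, ← sum_sub_distrib, ← sum_add_distrib]
    exact sum_congr rfl fun _ _ => by ring
  simp only [bmCoeff_eq_sum_range]
  linear_combination h / 2 ^ (2 * m)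

theorem bmCoeff_recurrence_general (m i : ℕ) (hi1 : 1 ≤ i) :
    (i : ℚ) * (i+1) * bmCoeff m (i+1) =
      (i : ℚ) * (2*m+1) * bmCoeff m i - ((m:ℚ)-i+1) * ((m:ℚ)+i) * bmCoeff m (i-1) := by
  obtain ⟨j, rfl⟩ := Nat.exists_eq_add_of_le' hi1
  rw [Nat.add_sub_cancel]
  push_cast
  linear_combination bmCoeff_three_term m j

theorem bmCoeff_recurrence (m i : ℕ) (hm : 2 ≤ m) (hi1 : 1 ≤ i) (hi2 : i ≤ m - 1) :
    (i : ℚ) * (i+1) * bmCoeff m (i+1) =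
      (i : ℚ) * (2*m+1) * bmCoeff m i - ((m:ℚ)-i+1) * ((m:ℚ)+i) * bmCoeff m (i-1) :=
  bmCoeff_recurrence_general m i hi1
end

section
/- For m ≥ 1 and 0 ≤ i ≤ m, D_i(m) := C(2m, m-i) * m! * i! * (m-i)! * 2^i * d_i(m) equals C(2m, m-i) * ∑_{j=0}^{m-i} C(m-i, j) * (1/2)^j * (1/2)_{m-i-j} * (m+i+j)!, where (x)_n = x(x+1)⋯(x+n-1) is the rising factorial. -/
open Finset

/-! Since `(1/2)_n = (2n)! / (4^n n!)`, after the substitution `k = i + j` the `k`-th term of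
`d_i(m)`, multiplied by `m! i! (m-i)! 2^i`, becomes the `j`-th term on the right: writing every
binomial coefficient through factorials, everything cancels except `2`-powers. -/

open Nat

theorem ascPochhammer_eval_half_mul {K : Type*} [Field K] [NeZero (2 : K)] (n : ℕ) :
    (4 : K) ^ n * n ! * (ascPochhammer K n).eval (1 / 2) = (2 * n)! := by
  induction n with
  | zero => simp
  | succ n ih =>
    rw [ascPochhammer_succ_eval, show 2 * (n + 1) = 2 * n + 1 + 1 by ring]
    simp only [factorial_succ, cast_mul, ← ih]
    field_simp
    push_cast
    ring

theorem factorials_mul_bmCoeff_summand {K : Type*} [Field K] [CharZero K] {m i k : ℕ}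
    (hik : i ≤ k) (hkm : k ≤ m) :
    (m ! : K) * i ! * (m - i)! * 2 ^ i *
        (2 ^ k * (2 * m - 2 * k).choose (m - k) * (m + k).choose k * k.choose i / 2 ^ (2 * m))
      = (m - i).choose (k - i) * (1 / 2) ^ (k - i) * (ascPochhammer K (m - k)).eval (1 / 2)
          * (m + k)! := by
  obtain ⟨j, rfl⟩ := Nat.exists_eq_add_of_le hik
  obtain ⟨n, rfl⟩ := Nat.exists_eq_add_of_le hkm
  have hpoch := ascPochhammer_eval_half_mul (K := K) n
  simp only [show 2 * (i + j + n) - 2 * (i + j) = 2 * n by omega, Nat.add_sub_cancel_left,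
    show i + j + n - i = j + n by omega]
  rw [cast_choose K (show n ≤ 2 * n by omega),
    cast_choose K (show i + j ≤ i + j + n + (i + j) by omega),
    cast_choose K (show i ≤ i + j by omega), cast_choose K (show j ≤ j + n by omega)]
  simp only [show 2 * n - n = n by omega, Nat.add_sub_cancel, Nat.add_sub_cancel_left]
  have hfact : ∀ r : ℕ, (r ! : K) ≠ 0 := fun r => cast_ne_zero.2 (factorial_ne_zero r)
  have heval : (ascPochhammer K n).eval (1 / 2) = (2 * n)! / (2 ^ (2 * n) * n !) := by
    rw [eq_div_iff (mul_ne_zero (pow_ne_zero _ two_ne_zero) (hfact n)), pow_mul]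
    linear_combination hpoch
  rw [heval, one_div, inv_pow]
  field_simp [hfact]
  ring

theorem factorials_mul_bmCoeff {m i : ℕ} (hi : i ≤ m) :
    (m ! : ℚ) * i ! * (m - i)! * 2 ^ i * bmCoeff m i
      = ∑ j ∈ range (m - i + 1),
          ((m - i).choose j : ℚ) * (1 / 2) ^ j * (ascPochhammer ℚ (m - i - j)).eval (1 / 2)
            * (m + i + j)! := by
  rw [bmCoeff, ← Ico_add_one_right_eq_Icc, sum_Ico_eq_sum_range,
    show m + 1 - i = m - i + 1 by omega, sum_div, mul_sum]
  refine sum_congr rfl fun j hj => ?_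
  rw [factorials_mul_bmCoeff_summand (Nat.le_add_right i j) (by grind), Nat.add_sub_cancel_left,
    Nat.sub_sub, add_assoc]

theorem bmD_eq_weighted_sum_general (m i : ℕ) (hi : i ≤ m) :
    bmD m i = (Nat.choose (2*m) (m-i) : ℚ) *
      ∑ j ∈ Finset.range (m-i+1),
        (Nat.choose (m-i) j : ℚ) * (1/2)^j *
          (ascPochhammer ℚ (m-i-j)).eval (1/2) * (Nat.factorial (m+i+j)) := by
  rw [bmD, ← factorials_mul_bmCoeff hi]
  ring

theorem bmD_eq_weighted_sum (m i : ℕ) (hm : 1 ≤ m) (hi : i ≤ m) :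
    bmD m i = (Nat.choose (2*m) (m-i) : ℚ) *
      ∑ j ∈ Finset.range (m-i+1),
        (Nat.choose (m-i) j : ℚ) * (1/2)^j *
          (ascPochhammer ℚ (m-i-j)).eval (1/2) * (Nat.factorial (m+i+j)) :=
  bmD_eq_weighted_sum_general m i hi
end

section
/- For m ≥ 2 and 1 ≤ i ≤ m-1, the Boros-Moll coefficients satisfy (m+i+1) D_{i+1}(m) * (m-i+1) D_{i-1}(m) < (m+i)(m-i+1) D_i(m)^2, where D_i(m) = C(2m, m-i) * m! * i! * (m-i)! * 2^i * d_i(m). -/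
open Finset

namespace BorosMoll

/-- Multiplied by `w_k`, the right-hand side is `V (k + 1) - V k` for `k < m` and `-V m` for
`k = m`, where `V k = (j+1)(2m+1-2k) w_k C(k, j+1)` is the telescoping certificate
(see `certificate_shift`). -/
theorem choose_three_term {R : Type*} [CommRing R] (m : R) (j k : ℕ) :
    ((j + 1) * (j + 2) * k.choose (j + 2) + (m + j + 1) * (m - j) * k.choose j
        - (j + 1) * (2 * m + 1) * k.choose (j + 1) : R) =
      (m - k) * (m + k + 1) * k.choose j - (j + 1) * (2 * m + 1 - 2 * k) * k.choose (j + 1) := by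
  have h₁ := Nat.cast_choose_succ_right_eq (R := R) k j
  have h₂ := Nat.cast_choose_succ_right_eq (R := R) k (j + 1)
  push_cast at h₂
  linear_combination (j + 1 : R) * h₂ - (k + j + 1 : R) * h₁

def weight (m k : ℕ) : ℚ := 2 ^ k * (m - k).centralBinom * (m + k).choose k

def num (m j : ℕ) : ℚ := ∑ k ∈ range (m + 1), weight m k * k.choose j

theorem weight_pos (m k : ℕ) : 0 < weight m k := by
  have := Nat.centralBinom_pos (m - k)
  have := Nat.choose_pos (Nat.le_add_left k m)
  unfold weight
  positivity

theorem weight_succ {m k : ℕ} (hk : k < m) :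
    (2 * m - 2 * k - 1 : ℚ) * (k + 1) * weight m (k + 1) =
      (m - k) * (m + k + 1) * weight m k := by
  obtain ⟨t, rfl⟩ : ∃ t, m = k + 1 + t := ⟨m - (k + 1), by omega⟩
  have hc : ((t + 1) * (t + 1).centralBinom : ℚ) = 2 * (2 * t + 1) * t.centralBinom := by
    exact_mod_cast Nat.succ_mul_centralBinom_succ t
  have hb : ((k + 1 + t + k + 1) * (k + 1 + t + k).choose k : ℚ)
      = (k + 1 + t + k + 1).choose (k + 1) * (k + 1) := by
    exact_mod_cast Nat.add_one_mul_choose_eq (k + 1 + t + k) k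
  simp only [weight, show k + 1 + t - k = t + 1 by omega, show k + 1 + t - (k + 1) = t by omega]
  push_cast at hb ⊢
  linear_combination -(2 : ℚ) ^ k * (2 * t + 1) * t.centralBinom * 2 * hb
    - (2 : ℚ) ^ k * (k + 1 + t + k + 1) * (k + 1 + t + k).choose k * hc

theorem certificate_shift {m k : ℕ} (j : ℕ) (hk : k < m) :
    (j + 1) * (2 * m + 1 - 2 * (k + 1) : ℚ) * weight m (k + 1) * (k + 1).choose (j + 1) =
      (m - k) * (m + k + 1) * weight m k * k.choose j := by
  have hc : ((k + 1) * k.choose j : ℚ) = (k + 1).choose (j + 1) * (j + 1) := by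
    exact_mod_cast Nat.add_one_mul_choose_eq k j
  linear_combination -(2 * m - 2 * k - 1 : ℚ) * weight m (k + 1) * hc
    + (k.choose j : ℚ) * weight_succ hk

theorem num_recurrence (m j : ℕ) :
    ((j + 1) * (j + 2) * num m (j + 2) + (m + j + 1) * (m - j) * num m j : ℚ) =
      (j + 1) * (2 * m + 1) * num m (j + 1) := by
  set V : ℕ → ℚ := fun k ↦ (j + 1) * (2 * m + 1 - 2 * k) * weight m k * k.choose (j + 1)
  set A : ℕ → ℚ := fun k ↦ (m - k) * (m + k + 1) * weight m k * k.choose j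
  have hAV : ∑ k ∈ range (m + 1), A k = ∑ k ∈ range (m + 1), V k := by
    rw [sum_range_succ, sum_range_succ']
    have hA : A m = 0 := by simp [A]
    have hV : V 0 = 0 := by simp [V]
    rw [hA, hV]
    refine congrArg (· + 0) (sum_congr rfl fun k hk ↦ ?_)
    simpa [A, V] using (certificate_shift j (mem_range.mp hk)).symm
  have hsum : ((j + 1) * (j + 2) * num m (j + 2) + (m + j + 1) * (m - j) * num m j
      - (j + 1) * (2 * m + 1) * num m (j + 1) : ℚ) = ∑ k ∈ range (m + 1), (A k - V k) := by
    simp only [num, mul_sum, ← sum_add_distrib, ← sum_sub_distrib]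
    refine sum_congr rfl fun k _ ↦ ?_
    linear_combination weight m k * choose_three_term (m : ℚ) j k
  rw [sum_sub_distrib, hAV, sub_self] at hsum
  linear_combination hsum

theorem num_pos {m j : ℕ} (h : j ≤ m) : 0 < num m j := by
  refine sum_pos' (fun k _ ↦ by have := weight_pos m k; positivity) ⟨j, ?_, ?_⟩
  · exact mem_range.mpr (Nat.lt_succ_of_le h)
  · simpa using weight_pos m j

theorem num_succ_lt {m j : ℕ} (h : j < m) : (j + 1) * num m (j + 1) < (m - j) * num m j := by
  simp only [num, mul_sum]
  refine sum_lt_sum (fun k hk ↦ ?_) ⟨j, mem_range.mpr (by omega), ?_⟩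
  · have hkm : (k : ℚ) ≤ m := by exact_mod_cast Nat.lt_succ_iff.mp (mem_range.mp hk)
    have hw := weight_pos m k
    calc (j + 1) * (weight m k * k.choose (j + 1) : ℚ)
        = weight m k * (k.choose (j + 1) * (j + 1)) := by ring
      _ = weight m k * (k.choose j * (k - j)) := by rw [Nat.cast_choose_succ_right_eq]
      _ ≤ weight m k * (k.choose j * (m - j)) := by gcongr
      _ = (m - j) * (weight m k * k.choose j) := by ring
  · have hjm : (j : ℚ) < m := by exact_mod_cast h
    simpa using mul_pos (sub_pos.mpr hjm) (weight_pos m j)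

theorem num_log_concave {m j : ℕ} (h : j + 2 ≤ m) :
    (j + 2) * num m (j + 2) * num m j < (j + 1) * num m (j + 1) ^ 2 := by
  have h₀ := num_pos (m := m) (j := j) (by omega)
  have hlt := num_succ_lt (m := m) (j := j) (by omega)
  have hfactor :
      ((j + 1) * ((j + 1) * num m (j + 1) ^ 2 - (j + 2) * num m (j + 2) * num m j) : ℚ) =
      ((m - j) * num m j - (j + 1) * num m (j + 1)) *
        ((m + j + 1) * num m j - (j + 1) * num m (j + 1)) := by
    linear_combination -num m j * num_recurrence m j
  have hpos : 0 < ((m - j) * num m j - (j + 1) * num m (j + 1)) *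
      ((m + j + 1) * num m j - (j + 1) * num m (j + 1)) := by
    apply mul_pos <;> nlinarith
  rw [← hfactor] at hpos
  linarith [pos_of_mul_pos_right hpos (by positivity)]

theorem bmCoeff_eq (m i : ℕ) : bmCoeff m i = num m i / 4 ^ m := by
  have h4 : (2 : ℚ) ^ (2 * m) = 4 ^ m := by rw [pow_mul]; norm_num
  rw [bmCoeff, h4, num]
  congr 1
  refine sum_subset (fun k hk ↦ ?_) (fun k hk hki ↦ ?_) |>.trans (sum_congr rfl fun k hk ↦ ?_)
  · simp only [mem_Icc, mem_range] at hk ⊢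
    omega
  · simp only [mem_Icc, mem_range, not_and] at hk hki
    simp [Nat.choose_eq_zero_of_lt (show k < i by omega)]
  · rw [weight, Nat.centralBinom, show 2 * m - 2 * k = 2 * (m - k) by omega]

theorem bmD_eq (m i : ℕ) :
    bmD m i =
      (2 * m).descFactorial (m - i) * m.factorial * i.factorial * 2 ^ i * num m i / 4 ^ m := by
  rw [bmD, bmCoeff_eq, Nat.descFactorial_eq_factorial_mul_choose]
  push_cast
  ring

theorem bmD_pos {m i : ℕ} (h : i ≤ m) : 0 < bmD m i := by
  have := Nat.descFactorial_pos.mpr (show m - i ≤ 2 * m by omega)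
  have := num_pos h
  rw [bmD_eq]
  positivity

theorem bmD_succ {m i : ℕ} (h : i < m) :
    (m + i + 1) * bmD m (i + 1) * num m i = 2 * (i + 1) * bmD m i * num m (i + 1) := by
  obtain ⟨t, rfl⟩ : ∃ t, m = i + 1 + t := ⟨m - (i + 1), by omega⟩
  rw [bmD_eq, bmD_eq, show i + 1 + t - i = t + 1 by omega, show i + 1 + t - (i + 1) = t by omega,
    Nat.descFactorial_succ, show 2 * (i + 1 + t) - t = i + 1 + t + i + 1 by omega,
    Nat.factorial_succ]
  push_cast
  ring

end BorosMoll

open BorosMoll in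
theorem bmD_log_concavity_general (m i : ℕ) (hi1 : 1 ≤ i) (hi2 : i ≤ m - 1) :
    ((m:ℚ)+i+1) * bmD m (i+1) * (((m:ℚ)-i+1) * bmD m (i-1)) <
      ((m:ℚ)+i) * ((m:ℚ)-i+1) * (bmD m i)^2 := by
  obtain ⟨j, rfl⟩ : ∃ j, i = j + 1 := ⟨i - 1, by omega⟩
  have hD₂ := bmD_succ (m := m) (i := j + 1) (by omega)
  have hD₀ := bmD_succ (m := m) (i := j) (by omega)
  have hD₁ := bmD_pos (m := m) (i := j + 1) (by omega)
  have hN₁ := num_pos (m := m) (j := j + 1) (by omega)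
  have key : (m + j + 2) * bmD m (j + 2) * bmD m j < (m + j + 1) * bmD m (j + 1) ^ 2 := by
    refine lt_of_mul_lt_mul_right (a := 2 * (j + 1) * num m (j + 1) ^ 2) ?_ (by positivity)
    calc _ = 2 * ((m + j + 1) * bmD m (j + 1) ^ 2) * ((j + 2) * num m (j + 2) * num m j) := by
          push_cast at hD₂ hD₀
          linear_combination (2 * (j + 1) * bmD m j * num m (j + 1)) * hD₂
            - (2 * (j + 2) * bmD m (j + 1) * num m (j + 2)) * hD₀
      _ < 2 * ((m + j + 1) * bmD m (j + 1) ^ 2) * ((j + 1) * num m (j + 1) ^ 2) :=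
          mul_lt_mul_of_pos_left (num_log_concave (by omega)) (by positivity)
      _ = _ := by ring
  have hjm : (j : ℚ) < m := by exact_mod_cast (show j < m by omega)
  simp only [Nat.add_sub_cancel]
  push_cast
  linear_combination (m - j : ℚ) * key

theorem bmD_log_concavity (m i : ℕ) (hm : 2 ≤ m) (hi1 : 1 ≤ i) (hi2 : i ≤ m - 1) :
    ((m:ℚ)+i+1) * bmD m (i+1) * (((m:ℚ)-i+1) * bmD m (i-1)) <
      ((m:ℚ)+i) * ((m:ℚ)-i+1) * (bmD m i)^2 :=
  bmD_log_concavity_general m i hi1 hi2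
end
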